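/- arXiv:2106.00427 — 2 statements merged into one kernel-verified Lean document; each statement's English description precedes it below -/
import Mathlib

section
/- An entire function G satisfies limsup_{|z|→∞} Re(conj(z)·G(z)) ≤ 0 if and only if G(z) = a z + b with either (i) Re a < 0 and b ∈ ℂ, or (ii) a purely imaginary and b = 0. -/
/-!
Write `G z = H z * z + G 0` with `H = dslope G 0` entire. Since
`Re (conj z * G z) = Re (H z) * ‖z‖ ^ 2 + Re (conj z * G 0)`, the hypothesis bounds `Re H` on the
circle of radius `r` by `r⁻¹ ^ 2 + ‖G 0‖ * r⁻¹ → 0`, so `Re H ≤ 0` by the maximum principle for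
`exp ∘ H`, and `H` is constant by Liouville's theorem for `(1 - H)⁻¹`. If that constant `a` has
`Re a = 0`, what remains is `Re (conj z * G 0)`, which is unbounded along `z = t * G 0`.
-/

open Complex ComplexConjugate Filter Topology Metric Set

namespace Complex

variable {E : Type*} [NormedAddCommGroup E] [NormedSpace ℂ E]

theorem re_le_of_forall_mem_frontier_re_le [Nontrivial E] {f : E → ℂ} {U : Set E}
    (hU : Bornology.IsBounded U) (hd : DiffContOnCl ℂ f U) {M : ℝ} (hM : ∀ z ∈ frontier U, (f z).re ≤ M) {z : E}
    (hz : z ∈ closure U) : (f z).re ≤ M := by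
  have hexp : DiffContOnCl ℂ (fun z => exp (f z)) U := differentiable_exp.comp_diffContOnCl hd
  have := norm_le_of_forall_mem_frontier_norm_le hU hexp
    (fun w hw => (norm_exp (f w)).trans_le (Real.exp_le_exp.2 (hM w hw))) hz
  rwa [norm_exp, Real.exp_le_exp] at this

theorem re_conj_mul_affine (a b z : ℂ) :
    (conj z * (a * z + b)).re = a.re * ‖z‖ ^ 2 + (conj z * b).re := by
  rw [mul_add, add_re, mul_left_comm, conj_mul', ← ofReal_pow, re_mul_ofReal]

theorem re_le_of_re_conj_mul_affine_le {a b w : ℂ} {C : ℝ} (hw : w ≠ 0)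
    (h : (conj w * (a * w + b)).re ≤ C) : a.re ≤ C * ‖w‖⁻¹ ^ 2 + ‖b‖ * ‖w‖⁻¹ := by
  have hb : -(‖w‖ * ‖b‖) ≤ (conj w * b).re := by
    simpa using neg_le_of_abs_le (abs_re_le_norm (conj w * b))
  rw [re_conj_mul_affine] at h
  have hw' : 0 < ‖w‖ := norm_pos_iff.2 hw
  have key : a.re * ‖w‖ ^ 2 ≤ (C * ‖w‖⁻¹ ^ 2 + ‖b‖ * ‖w‖⁻¹) * ‖w‖ ^ 2 := by
    field_simp
    linarith
  exact le_of_mul_le_mul_right key (by positivity)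

theorem re_conj_mul_affine_nonpos {a b z : ℂ} (hz : ‖b‖ ≤ -a.re * ‖z‖) :
    (conj z * (a * z + b)).re ≤ 0 := by
  have hb : (conj z * b).re ≤ ‖z‖ * ‖b‖ := by simpa using re_le_norm (conj z * b)
  rw [re_conj_mul_affine]
  nlinarith [norm_nonneg z]

theorem eq_zero_of_forall_norm_ge_re_conj_mul_le {b : ℂ} {R C : ℝ}
    (h : ∀ z : ℂ, R ≤ ‖z‖ → (conj z * b).re ≤ C) : b = 0 := by
  by_contra hb
  have hb' : 0 < ‖b‖ := norm_pos_iff.2 hb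
  obtain ⟨t, ht0, htR, htC⟩ := ((eventually_ge_atTop 0).and
    (((tendsto_id.atTop_mul_const hb').eventually_ge_atTop R).and
    ((tendsto_id.atTop_mul_const (pow_pos hb' 2)).eventually_gt_atTop C))).exists
  have hre : (conj (t * b) * b).re = t * ‖b‖ ^ 2 := by
    rw [map_mul, conj_ofReal, mul_assoc, conj_mul', ← ofReal_pow, ← ofReal_mul, ofReal_re]
  simp only [id] at htC
  have := h (t * b) (by rw [norm_mul, norm_real, Real.norm_of_nonneg ht0]; exact htR)
  linarith

end Complex

namespace Differentiable

variable {E : Type*} [NormedAddCommGroup E] [NormedSpace ℂ E]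

theorem apply_eq_apply_of_re_le {f : E → ℂ} (hf : Differentiable ℂ f) {M : ℝ}
    (hM : ∀ z, (f z).re ≤ M) (z w : E) : f z = f w := by
  have one_le : ∀ z, 1 ≤ ‖(M + 1 : ℂ) - f z‖ := fun z => calc
    1 ≤ ((M + 1 : ℂ) - f z).re := by
      simp only [sub_re, add_re, ofReal_re, one_re]
      linarith [hM z]
    _ ≤ _ := re_le_norm _
  have hne : ∀ z, (M + 1 : ℂ) - f z ≠ 0 := fun z =>
    norm_ne_zero_iff.1 (one_pos.trans_le (one_le z)).ne'
  have hg : Differentiable ℂ fun z => ((M + 1 : ℂ) - f z)⁻¹ := fun z =>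
    ((differentiableAt_const _).sub (hf z)).inv (hne z)
  have hbdd : Bornology.IsBounded (range fun z => ((M + 1 : ℂ) - f z)⁻¹) := by
    refine isBounded_iff_forall_norm_le.2 ⟨1, ?_⟩
    rintro _ ⟨z, rfl⟩
    rw [norm_inv]
    exact inv_le_one_of_one_le₀ (one_le z)
  simpa using inv_injective (hg.apply_eq_apply_of_bounded hbdd z w)

theorem re_nonpos_of_eventually_re_le_on_sphere {f : ℂ → ℂ} (hf : Differentiable ℂ f) {g : ℝ → ℝ}
    (hg : Tendsto g atTop (𝓝 0)) (hfg : ∀ᶠ r in atTop, ∀ w ∈ sphere (0 : ℂ) r, (f w).re ≤ g r)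
    (z : ℂ) : (f z).re ≤ 0 := by
  refine ge_of_tendsto hg ?_
  filter_upwards [hfg, eventually_gt_atTop ‖z‖] with r hr hzr
  have hr0 : r ≠ 0 := ((norm_nonneg z).trans_lt hzr).ne'
  refine re_le_of_forall_mem_frontier_re_le isBounded_ball hf.diffContOnCl
    (fun w hw => hr w (by rwa [frontier_ball (0 : ℂ) hr0] at hw)) ?_
  rw [closure_ball 0 hr0]
  simpa using hzr.le


theorem exists_forall_eq_mul_add_of_re_conj_mul_le {G : ℂ → ℂ} (hG : Differentiable ℂ G)
    {R C : ℝ} (h : ∀ z : ℂ, R ≤ ‖z‖ → (conj z * G z).re ≤ C) :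
    ∃ a : ℂ, a.re ≤ 0 ∧ ∀ z, G z = a * z + G 0 := by
  set H := dslope G 0
  have hGH : ∀ z, G z = H z * z + G 0 := fun z => by
    linear_combination (sub_smul_dslope G 0 z).symm
  have hH : Differentiable ℂ H :=
    differentiableOn_univ.1 ((differentiableOn_dslope univ_mem).2 hG.differentiableOn)
  have hH_re : ∀ z, (H z).re ≤ 0 := by
    refine hH.re_nonpos_of_eventually_re_le_on_sphere
      (g := fun r => C * r⁻¹ ^ 2 + ‖G 0‖ * r⁻¹) ?_ ?_
    · simpa using ((tendsto_inv_atTop_zero.pow 2).const_mul C).add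
        (tendsto_inv_atTop_zero.const_mul ‖G 0‖)
    · filter_upwards [eventually_ge_atTop R, eventually_gt_atTop 0] with r hrR hr0 w hw
      rw [mem_sphere_zero_iff_norm] at hw
      subst hw
      exact re_le_of_re_conj_mul_affine_le (norm_pos_iff.1 hr0) (hGH w ▸ h w hrR)
  refine ⟨H 0, hH_re 0, fun z => ?_⟩
  rw [hGH, hH.apply_eq_apply_of_re_le hH_re z 0]

end Differentiable

theorem limsup_re_condition_iff_affine (G : ℂ → ℂ) (hG : Differentiable ℂ G) :
    (∀ ε : ℝ, 0 < ε → ∃ R : ℝ, 0 < R ∧ ∀ z : ℂ, R ≤ ‖z‖ →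
      ((starRingEnd ℂ) z * G z).re ≤ ε) ↔
    ∃ a b : ℂ, (∀ z, G z = a * z + b) ∧
      (a.re < 0 ∨ (a.re = 0 ∧ b = 0)) := by
  constructor
  · intro h
    obtain ⟨R, -, hR⟩ := h 1 one_pos
    obtain ⟨a, ha, hGa⟩ := hG.exists_forall_eq_mul_add_of_re_conj_mul_le hR
    refine ⟨a, G 0, hGa, ha.lt_or_eq.imp_right fun hzero => ⟨hzero, ?_⟩⟩
    refine eq_zero_of_forall_norm_ge_re_conj_mul_le (R := R) (C := 1) fun z hz => ?_
    have := hR z hz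
    rwa [hGa, re_conj_mul_affine, hzero, zero_mul, zero_add] at this
  · rintro ⟨a, b, hGab, hneg | ⟨hzero, rfl⟩⟩ ε hε
    · have ha : 0 < -a.re := neg_pos.2 hneg
      refine ⟨‖b‖ / -a.re + 1, by positivity, fun z hz => ?_⟩
      rw [hGab]
      exact (re_conj_mul_affine_nonpos ((div_le_iff₀' ha).1 (by linarith))).trans hε.le
    · refine ⟨1, one_pos, fun z _ => ?_⟩
      rw [hGab, re_conj_mul_affine, hzero]
      simpa using hε.le
end

section
/- Let φ(z) = a z + b with 0 < |a| < 1 and fixed point α = b/(1-a). Suppose w is holomorphic near α with w(α) ≠ 0 and f, g are holomorphic near α, not identically zero, both satisfying w(z)·h(φ(z)) = λ·h(z) near α for the same λ ≠ 0 (h = f and h = g). Then f and g have the same order of vanishing M at α, λ = a^M w(α), and f = c·g near α for some constant c ∈ ℂ. -/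
/-! Write `h z = (z - α) ^ M * u z` with `u α ≠ 0`. Since `a * z + b - α = a * (z - α)`, comparing
leading terms in `w z * h (a * z + b) = λ * h z` gives `λ = a ^ M * w α`, and as `‖a‖ ∉ {0, 1}` the
eigenvalue determines `M`. So `f` and `g` have the same order, and if `c` cancels their leading
coefficients then `f - c * g` is an eigenfunction for `λ` of larger order, hence vanishes near `α`. -/

open Filter Topology

lemma pow_right_injective_of_norm_ne_one {𝕜 : Type*} [NormedDivisionRing 𝕜] {a : 𝕜}
    (h0 : 0 < ‖a‖) (h1 : ‖a‖ ≠ 1) : Function.Injective (a ^ · : ℕ → 𝕜) := fun m n h ↦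
  pow_right_injective₀ h0 h1 (by simpa only [norm_pow] using congrArg norm h)

section Eigenfunction

variable {𝕜 : Type*} [NontriviallyNormedField 𝕜] {a b α lam : 𝕜} {w h : 𝕜 → 𝕜}

lemma eigenvalue_eq_pow_mul_of_analyticOrderAt_eq {M : ℕ} (hfix : a * α + b = α)
    (hw : ContinuousAt w α) (hh : AnalyticAt 𝕜 h α) (hM : analyticOrderAt h α = M)
    (heq : ∀ᶠ z in 𝓝 α, w z * h (a * z + b) = lam * h z) :
    lam = a ^ M * w α := by
  obtain ⟨u, hu, huα, hrep⟩ := hh.analyticOrderAt_eq_natCast.mp hM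
  have hφ : Tendsto (fun z ↦ a * z + b) (𝓝 α) (𝓝 α) := by
    simpa only [hfix] using (Continuous.tendsto (by fun_prop) α : Tendsto _ _ (𝓝 (a * α + b)))
  have hcu : ContinuousAt (fun z ↦ u (a * z + b)) α :=
    ContinuousAt.comp (by rw [hfix]; exact hu.continuousAt) (by fun_prop)
  -- Dividing the eigenvalue equation by `(z - α) ^ M` leaves an identity between continuous
  -- functions on a punctured neighbourhood, which then also holds at `α`.
  have hpunct : ∀ᶠ z in 𝓝[≠] α, a ^ M * w z * u (a * z + b) = lam * u z := by
    filter_upwards [self_mem_nhdsWithin, nhdsWithin_le_nhds heq, nhdsWithin_le_nhds hrep,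
      nhdsWithin_le_nhds (hφ.eventually hrep)] with z hz heqz hrepz hrepφz
    have hφz : a * z + b - α = a * (z - α) := by linear_combination hfix
    rw [hrepz, hrepφz, hφz, smul_eq_mul, smul_eq_mul, mul_pow] at heqz
    refine mul_left_cancel₀ (pow_ne_zero M (sub_ne_zero.mpr hz)) ?_
    linear_combination heqz
  have hatα : a ^ M * w α * u (a * α + b) = lam * u α := tendsto_nhds_unique_of_eventuallyEq
    ((continuousAt_const.mul hw).mul hcu).continuousWithinAt
    (continuousAt_const.mul hu.continuousAt).continuousWithinAt hpunct
  rw [hfix] at hatα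
  exact (mul_right_cancel₀ huα hatα).symm

lemma analyticOrderAt_eq_of_eigenvalue_eq_pow_mul {M : ℕ} (ha0 : 0 < ‖a‖) (ha1 : ‖a‖ ≠ 1)
    (hwα : w α ≠ 0) (hfix : a * α + b = α) (hw : ContinuousAt w α) (hh : AnalyticAt 𝕜 h α)
    (heq : ∀ᶠ z in 𝓝 α, w z * h (a * z + b) = lam * h z) (hlam : lam = a ^ M * w α)
    (htop : analyticOrderAt h α ≠ ⊤) :
    analyticOrderAt h α = M := by
  obtain ⟨K, hK⟩ := ENat.ne_top_iff_exists.mp htop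
  have hlamK := eigenvalue_eq_pow_mul_of_analyticOrderAt_eq hfix hw hh hK.symm heq
  rw [← hK, pow_right_injective_of_norm_ne_one ha0 ha1
    (mul_right_cancel₀ hwα (hlamK.symm.trans hlam))]

end Eigenfunction

lemma exists_lt_analyticOrderAt_sub_mul {𝕜 : Type*} [NontriviallyNormedField 𝕜] {f g : 𝕜 → 𝕜}
    {z₀ : 𝕜} {M : ℕ} (hf : AnalyticAt 𝕜 f z₀) (hg : AnalyticAt 𝕜 g z₀)
    (hfM : analyticOrderAt f z₀ = M) (hgM : analyticOrderAt g z₀ = M) :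
    ∃ c : 𝕜, (M : ℕ∞) < analyticOrderAt (fun z ↦ f z - c * g z) z₀ := by
  obtain ⟨u, hu, -, hfu⟩ := hf.analyticOrderAt_eq_natCast.mp hfM
  obtain ⟨v, hv, hv0, hgv⟩ := hg.analyticOrderAt_eq_natCast.mp hgM
  refine ⟨u z₀ / v z₀, ?_⟩
  have ht : AnalyticAt 𝕜 (fun z ↦ u z - u z₀ / v z₀ * v z) z₀ := hu.sub (analyticAt_const.mul hv)
  have ht0 : analyticOrderAt (fun z ↦ u z - u z₀ / v z₀ * v z) z₀ ≠ 0 := by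
    rw [ht.analyticOrderAt_ne_zero, div_mul_cancel₀ _ hv0, sub_self]
  have hrep : (fun z ↦ f z - u z₀ / v z₀ * g z) =ᶠ[𝓝 z₀]
      (· - z₀) ^ M * fun z ↦ u z - u z₀ / v z₀ * v z := by
    filter_upwards [hfu, hgv] with z hfz hgz
    simp only [hfz, hgz, smul_eq_mul, Pi.mul_apply, Pi.pow_apply]
    ring
  rw [analyticOrderAt_congr hrep, analyticOrderAt_mul (by fun_prop) ht,
    analyticOrderAt_centeredMonomial, ← ENat.add_one_le_iff (ENat.natCast_ne_top M)]
  gcongr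
  exact Order.one_le_iff_ne_zero.mpr ht0

theorem eigenvalues_simple_general (a b lam : ℂ)
    (ha0 : 0 < ‖a‖) (ha1 : ‖a‖ < 1)
    (α : ℂ) (hα : α = b / (1 - a))
    (w f g : ℂ → ℂ)
    (hw : AnalyticAt ℂ w α) (hwα : w α ≠ 0)
    (hf : AnalyticAt ℂ f α) (hg : AnalyticAt ℂ g α)
    (hf0 : ¬ ∀ᶠ z in nhds α, f z = 0)
    (hg0 : ¬ ∀ᶠ z in nhds α, g z = 0)
    (heqf : ∀ᶠ z in nhds α, w z * f (a * z + b) = lam * f z)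
    (heqg : ∀ᶠ z in nhds α, w z * g (a * z + b) = lam * g z) :
    ∃ M : ℕ, analyticOrderAt f α = (M : ℕ∞) ∧ analyticOrderAt g α = (M : ℕ∞) ∧
      lam = a ^ M * w α ∧ ∃ c : ℂ, ∀ᶠ z in nhds α, f z = c * g z := by
  have h1a : 1 - a ≠ 0 := sub_ne_zero.mpr fun h ↦ by simp [← h] at ha1
  have hfix : a * α + b = α := by rw [hα]; field_simp; ring
  obtain ⟨M, hM⟩ := ENat.ne_top_iff_exists.mp (mt analyticOrderAt_eq_top.mp hf0)
  have hlam := eigenvalue_eq_pow_mul_of_analyticOrderAt_eq hfix hw.continuousAt hf hM.symm heqf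
  have hgM := analyticOrderAt_eq_of_eigenvalue_eq_pow_mul ha0 ha1.ne hwα hfix hw.continuousAt hg
    heqg hlam (mt analyticOrderAt_eq_top.mp hg0)
  obtain ⟨c, hc⟩ := exists_lt_analyticOrderAt_sub_mul hf hg hM.symm hgM
  refine ⟨M, hM.symm, hgM, hlam, c, ?_⟩
  have heqF : ∀ᶠ z in 𝓝 α, w z * (f (a * z + b) - c * g (a * z + b)) = lam * (f z - c * g z) := by
    filter_upwards [heqf, heqg] with z hfz hgz
    linear_combination hfz - c * hgz
  have hFtop : analyticOrderAt (fun z ↦ f z - c * g z) α = ⊤ := by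
    by_contra htop
    exact hc.ne' (analyticOrderAt_eq_of_eigenvalue_eq_pow_mul ha0 ha1.ne hwα hfix hw.continuousAt
      (hf.sub (analyticAt_const.mul hg)) heqF hlam htop)
  filter_upwards [analyticOrderAt_eq_top.mp hFtop] with z hz
  exact sub_eq_zero.mp hz

theorem eigenvalues_simple (a b lam : ℂ)
    (ha0 : 0 < ‖a‖) (ha1 : ‖a‖ < 1) (hlam : lam ≠ 0)
    (α : ℂ) (hα : α = b / (1 - a))
    (w f g : ℂ → ℂ)
    (hw : AnalyticAt ℂ w α) (hwα : w α ≠ 0)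
    (hf : AnalyticAt ℂ f α) (hg : AnalyticAt ℂ g α)
    (hf0 : ¬ ∀ᶠ z in nhds α, f z = 0)
    (hg0 : ¬ ∀ᶠ z in nhds α, g z = 0)
    (heqf : ∀ᶠ z in nhds α, w z * f (a * z + b) = lam * f z)
    (heqg : ∀ᶠ z in nhds α, w z * g (a * z + b) = lam * g z) :
    ∃ M : ℕ, analyticOrderAt f α = (M : ℕ∞) ∧ analyticOrderAt g α = (M : ℕ∞) ∧
      lam = a ^ M * w α ∧ ∃ c : ℂ, ∀ᶠ z in nhds α, f z = c * g z :=
  eigenvalues_simple_general a b lam ha0 ha1 α hα w f g hw hwα hf hg hf0 hg0 heqf heqg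
end
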